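/- arXiv:1505.02454 — 2 statements merged into one kernel-verified Lean document; each statement's English description precedes it below -/
import Mathlib

section
/- Let h be an abelian restricted Lie algebra over k. For all r, s ∈ h, in the cobar construction Ω u(h) one has ω(r) + ω(s) − ω(r+s) = ∂¹( Σ_{i=1}^{p−1} ((p−1)!/(i!·(p−i)!)) r^i s^{p−i} ). Moreover ω(α r) = α^p ω(r) for every α ∈ k. -/
set_option linter.unusedSectionVars false

open scoped TensorProduct

namespace PD

attribute [local instance 100] LieRing.ofAssociativeRing

/-- An abelian restricted Lie algebra over `k` (of characteristic `p`): an abelian Lie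
algebra (trivial bracket) together with its restricted `p`-th power map, which for an
abelian Lie algebra is additive and Frobenius-semilinear. -/
class AbRes (p : ℕ) (k : Type) (V : Type) [Field k] [AddCommGroup V] [Module k V] :
    Type where
  pMap : V → V
  pMap_add : ∀ x y : V, pMap (x + y) = pMap x + pMap y
  pMap_smul : ∀ (a : k) (x : V), pMap (a • x) = a ^ p • pMap x

/-- Type synonym equipping a module with its trivial (abelian) Lie algebra structure. -/
def Ab (V : Type) : Type := V

instance (V : Type) [AddCommGroup V] : AddCommGroup (Ab V) := inferInstanceAs (AddCommGroup V)

instance (k V : Type) [Field k] [AddCommGroup V] [Module k V] : Module k (Ab V) :=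
  inferInstanceAs (Module k V)

instance (V : Type) [AddCommGroup V] : LieRing (Ab V) :=
  { (inferInstanceAs (AddCommGroup (Ab V)) : AddCommGroup (Ab V)) with
    bracket := fun _ _ => 0
    add_lie := by intros; simp
    lie_add := by intros; simp
    lie_self := by intros; rfl
    leibniz_lie := by intros; simp }

instance (k V : Type) [Field k] [AddCommGroup V] [Module k V] : LieAlgebra k (Ab V) :=
  { (inferInstanceAs (Module k (Ab V)) : Module k (Ab V)) with
    lie_smul := by intros; show (0 : Ab V) = _ • (0 : Ab V); simp }

/-- The identity of `V`, viewed as a linear equivalence `V ≃ Ab V`. -/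
def toAb (k V : Type) [Field k] [AddCommGroup V] [Module k V] : V ≃ₗ[k] Ab V :=
  LinearEquiv.refl k V

section Core

variable (p : ℕ) [Fact (Nat.Prime p)] (k : Type) [Field k] [CharP k p]
variable (V : Type) [AddCommGroup V] [Module k V]
variable [AbRes p k V]

/-- The relation defining `u(h) = U(h)/(x^p - x^{[p]})`. -/
def uRel : UniversalEnvelopingAlgebra k (Ab V) → UniversalEnvelopingAlgebra k (Ab V) → Prop :=
  fun a b => ∃ x : V,
    a = (UniversalEnvelopingAlgebra.ι k (toAb k V x) : UniversalEnvelopingAlgebra k (Ab V)) ^ p ∧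
    b = UniversalEnvelopingAlgebra.ι k (toAb k V (AbRes.pMap (p := p) (k := k) x))

/-- The restricted universal enveloping algebra `u(h) := U(h)/(x^p − x^{[p]}, x ∈ h)`. -/
abbrev uRes : Type := RingQuot (uRel p k V)

/-- The canonical linear map `h → u(h)`. -/
noncomputable def mkι : V →ₗ[k] uRes p k V :=
  (RingQuot.mkAlgHom k (uRel p k V)).toLinearMap.comp
    ((UniversalEnvelopingAlgebra.ι k).toLinearMap.comp (toAb k V).toLinearMap)

lemma uea_comm (a b : Ab V) :
    (UniversalEnvelopingAlgebra.ι k a : UniversalEnvelopingAlgebra k (Ab V)) *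
      UniversalEnvelopingAlgebra.ι k b =
    UniversalEnvelopingAlgebra.ι k b * UniversalEnvelopingAlgebra.ι k a := by
  have h := (UniversalEnvelopingAlgebra.ι (R := k) (L := Ab V)).map_lie a b
  rw [show ⁅a, b⁆ = (0 : Ab V) from rfl, map_zero,
    LieRing.of_associative_ring_bracket] at h
  exact sub_eq_zero.1 h.symm

lemma mkι_comm (x y : V) : mkι p k V x * mkι p k V y = mkι p k V y * mkι p k V x := by
  show (RingQuot.mkAlgHom k (uRel p k V)) (UniversalEnvelopingAlgebra.ι k (toAb k V x)) *
      (RingQuot.mkAlgHom k (uRel p k V)) (UniversalEnvelopingAlgebra.ι k (toAb k V y)) = _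
  rw [← map_mul (RingQuot.mkAlgHom k (uRel p k V)), uea_comm, map_mul]
  rfl

lemma mkι_pow (x : V) :
    mkι p k V x ^ p = mkι p k V (AbRes.pMap (p := p) (k := k) x) := by
  show (RingQuot.mkAlgHom k (uRel p k V)) (UniversalEnvelopingAlgebra.ι k (toAb k V x)) ^ p = _
  rw [← map_pow]
  exact RingQuot.mkAlgHom_rel k ⟨x, rfl, rfl⟩

/-- Freshman's dream in any `k`-algebra (`k` of characteristic `p`), for commuting
elements. -/
lemma add_pow_charP {A : Type} [Ring A] [Algebra k A] {x y : A} (h : Commute x y) :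
    (x + y) ^ p = x ^ p + y ^ p := by
  obtain ⟨r, hr⟩ := h.exists_add_pow_prime_eq (Fact.out : Nat.Prime p)
  have hp0 : ((p : ℕ) : A) = 0 := by
    rw [← map_natCast (algebraMap k A) p, CharP.cast_eq_zero k p, map_zero]
  rw [hr, hp0, zero_mul, zero_mul, zero_mul, add_zero]

/-- Build a Lie algebra morphism (for the trivial bracket on `V`) from a linear map with
pairwise commuting images. -/
noncomputable def lieHomOfLinear {A : Type} [Ring A] [Algebra k A] (f : V →ₗ[k] A)
    (hf : ∀ x y : V, f x * f y = f y * f x) : Ab V →ₗ⁅k⁆ A :=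
  { toLinearMap := f.comp (toAb k V).symm.toLinearMap
    map_lie' := by
      intro x y
      show f.comp (toAb k V).symm.toLinearMap ((0 : Ab V)) = ⁅_, _⁆
      rw [LieRing.of_associative_ring_bracket]
      simp only [map_zero]
      exact (sub_eq_zero.2 (hf _ _)).symm }

/-- The universal property of `u(h)`: a linear map `f : h → A` with commuting images
satisfying `f(x)^p = f(x^{[p]})` extends to an algebra map `u(h) → A`. -/
noncomputable def extendAlg {A : Type} [Ring A] [Algebra k A] (f : V →ₗ[k] A)
    (hf : ∀ x y : V, f x * f y = f y * f x)
    (hp : ∀ x : V, f x ^ p = f (AbRes.pMap (p := p) (k := k) x)) :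
    uRes p k V →ₐ[k] A :=
  RingQuot.liftAlgHom k
    ⟨UniversalEnvelopingAlgebra.lift k (lieHomOfLinear (k := k) (V := V) f hf), by
      rintro a b ⟨x, rfl, rfl⟩
      simp only [map_pow, UniversalEnvelopingAlgebra.lift_ι_apply]
      exact hp x⟩

@[simp] lemma extendAlg_mkι {A : Type} [Ring A] [Algebra k A] (f : V →ₗ[k] A)
    (hf : ∀ x y : V, f x * f y = f y * f x)
    (hp : ∀ x : V, f x ^ p = f (AbRes.pMap (p := p) (k := k) x)) (x : V) :
    extendAlg p k V f hf hp (mkι p k V x) = f x := by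
  show RingQuot.liftAlgHom k _
    ((RingQuot.mkAlgHom k (uRel p k V)) (UniversalEnvelopingAlgebra.ι k (toAb k V x))) = f x
  rw [RingQuot.liftAlgHom_mkAlgHom_apply, UniversalEnvelopingAlgebra.lift_ι_apply]
  rfl

/-- The counit `ε : u(h) → k`. -/
noncomputable def counit : uRes p k V →ₐ[k] k :=
  extendAlg p k V (0 : V →ₗ[k] k) (by intros; simp) (by
    intro x
    simp [zero_pow (Nat.Prime.ne_zero (Fact.out : Nat.Prime p))])

/-- The augmentation ideal `u(h)⁺`, as a submodule. -/
noncomputable def Aplus : Submodule k (uRes p k V) :=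
  LinearMap.ker (counit p k V).toLinearMap

/-- `(u(h)⁺)^{⊗2}` viewed inside `u(h) ⊗ u(h)`. -/
noncomputable def AplusSq : Submodule k (uRes p k V ⊗[k] uRes p k V) :=
  Submodule.map₂ (TensorProduct.mk k (uRes p k V) (uRes p k V)) (Aplus p k V) (Aplus p k V)

/-- The comultiplication `Δ : u(h) → u(h) ⊗ u(h)`, the algebra map making every element
of `h` primitive. -/
noncomputable def comul : uRes p k V →ₐ[k] uRes p k V ⊗[k] uRes p k V :=
  extendAlg p k V
    (((TensorProduct.mk k (uRes p k V) (uRes p k V)).flip 1).comp (mkι p k V)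
      + (TensorProduct.mk k (uRes p k V) (uRes p k V) 1).comp (mkι p k V))
    (by
      intro x y
      simp only [LinearMap.add_apply, LinearMap.coe_comp, Function.comp_apply,
        TensorProduct.mk_apply, LinearMap.flip_apply]
      simp only [add_mul, mul_add, Algebra.TensorProduct.tmul_mul_tmul, one_mul, mul_one,
        mkι_comm p k V x y]
      abel)
    (by
      intro x
      simp only [LinearMap.add_apply, LinearMap.coe_comp, Function.comp_apply,
        TensorProduct.mk_apply, LinearMap.flip_apply]
      have hc : Commute ((mkι p k V x) ⊗ₜ[k] (1 : uRes p k V))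
          ((1 : uRes p k V) ⊗ₜ[k] (mkι p k V x)) := by
        unfold Commute SemiconjBy
        simp [Algebra.TensorProduct.tmul_mul_tmul]
      rw [add_pow_charP p k hc, Algebra.TensorProduct.tmul_pow, Algebra.TensorProduct.tmul_pow,
        one_pow, mkι_pow])

/-- The first cobar differential `∂¹(r) = 1 ⊗ r − Δ(r) + r ⊗ 1`. -/
noncomputable def d1 : uRes p k V →ₗ[k] uRes p k V ⊗[k] uRes p k V :=
  TensorProduct.mk k (uRes p k V) (uRes p k V) 1 - (comul p k V).toLinearMap
    + (TensorProduct.mk k (uRes p k V) (uRes p k V)).flip 1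

/-- The second cobar differential `∂²(r ⊗ s) = 1 ⊗ r ⊗ s − Δ(r) ⊗ s + r ⊗ Δ(s) − r ⊗ s ⊗ 1`. -/
noncomputable def d2 : uRes p k V ⊗[k] uRes p k V →ₗ[k]
    uRes p k V ⊗[k] (uRes p k V ⊗[k] uRes p k V) :=
  TensorProduct.mk k (uRes p k V) (uRes p k V ⊗[k] uRes p k V) 1
    - (TensorProduct.assoc k (uRes p k V) (uRes p k V) (uRes p k V)).toLinearMap.comp
        (LinearMap.rTensor (uRes p k V) (comul p k V).toLinearMap)
    + LinearMap.lTensor (uRes p k V) (comul p k V).toLinearMap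
    - (TensorProduct.assoc k (uRes p k V) (uRes p k V) (uRes p k V)).toLinearMap.comp
        ((TensorProduct.mk k (uRes p k V ⊗[k] uRes p k V) (uRes p k V)).flip 1)

/-- The element `ω(r) = ∑_{i=1}^{p−1} ((p−1)!/(i!(p−i)!)) rⁱ ⊗ r^{p−i}`. -/
noncomputable def omega (r : uRes p k V) : uRes p k V ⊗[k] uRes p k V :=
  ∑ i ∈ Finset.Ico 1 p,
    ((Nat.factorial (p-1) / (Nat.factorial i * Nat.factorial (p - i)) : ℕ) : k) •
      ((r ^ i) ⊗ₜ[k] (r ^ (p - i)))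

/-- The extension of `ρ_z : h → h` (with `ρ_z ∘ [p] = 0`) to a derivation of `u(h)`,
constructed through the trivial square-zero extension. -/
noncomputable def Dres (f : V →ₗ[k] V)
    (hf : ∀ x : V, f (AbRes.pMap (p := p) (k := k) x) = 0) :
    uRes p k V →ₗ[k] uRes p k V :=
  ((TrivSqZeroExt.sndHom (uRes p k V) (uRes p k V)).restrictScalars k).comp
    (extendAlg p k V
      ({ toFun := fun x => TrivSqZeroExt.inl (mkι p k V x)
              + TrivSqZeroExt.inr (mkι p k V (f x))
         map_add' := by
          intro x y
          simp only [map_add, TrivSqZeroExt.inl_add, TrivSqZeroExt.inr_add]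
          abel
         map_smul' := by
          intro c x
          simp only [map_smul, TrivSqZeroExt.inl_smul, TrivSqZeroExt.inr_smul, smul_add,
            RingHom.id_apply] } : V →ₗ[k] TrivSqZeroExt (uRes p k V) (uRes p k V))
      (by
        intro x y
        simp only [LinearMap.coe_mk, AddHom.coe_mk]
        simp only [add_mul, mul_add, TrivSqZeroExt.inl_mul_inl, TrivSqZeroExt.inl_mul_inr,
          TrivSqZeroExt.inr_mul_inl, TrivSqZeroExt.inr_mul_inr, smul_eq_mul,
          MulOpposite.smul_eq_mul_unop, MulOpposite.unop_op]
        rw [mkι_comm p k V x y, mkι_comm p k V x (f y), mkι_comm p k V (f x) y]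
        abel
      )
      (by
        intro x
        simp only [LinearMap.coe_mk, AddHom.coe_mk]
        have hc : Commute
            (TrivSqZeroExt.inl (mkι p k V x) : TrivSqZeroExt (uRes p k V) (uRes p k V))
            (TrivSqZeroExt.inr (mkι p k V (f x))) := by
          unfold Commute SemiconjBy
          rw [TrivSqZeroExt.inl_mul_inr, TrivSqZeroExt.inr_mul_inl, smul_eq_mul,
            MulOpposite.smul_eq_mul_unop, MulOpposite.unop_op, mkι_comm]
        rw [add_pow_charP p k hc]
        have h2 : (TrivSqZeroExt.inr (mkι p k V (f x)) :
            TrivSqZeroExt (uRes p k V) (uRes p k V)) ^ p = 0 := by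
          have h2' : (TrivSqZeroExt.inr (mkι p k V (f x)) :
              TrivSqZeroExt (uRes p k V) (uRes p k V)) ^ 2 = 0 := by
            rw [sq, TrivSqZeroExt.inr_mul_inr]
          have hle : 2 + (p - 2) = p := by
            have := (Fact.out : Nat.Prime p).two_le
            omega
          have hv : (TrivSqZeroExt.inr (mkι p k V (f x)) :
              TrivSqZeroExt (uRes p k V) (uRes p k V)) ^ p
              = (TrivSqZeroExt.inr (mkι p k V (f x)) :
              TrivSqZeroExt (uRes p k V) (uRes p k V)) ^ (2 + (p - 2)) := by rw [hle]
          rw [hv, pow_add, h2', zero_mul]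
        have h3 : (TrivSqZeroExt.inl (mkι p k V x) :
            TrivSqZeroExt (uRes p k V) (uRes p k V)) ^ p
            = TrivSqZeroExt.inl ((mkι p k V x) ^ p) :=
          (map_pow (TrivSqZeroExt.inlHom (uRes p k V) (uRes p k V)) (mkι p k V x) p).symm
        rw [h2, add_zero, h3, mkι_pow, hf x, map_zero, TrivSqZeroExt.inr_zero, add_zero]
      )).toLinearMap

/-- The action of `ρ_z` on `u(h) ⊗ u(h)`, i.e. `ρ ⊗ 1 + 1 ⊗ ρ`. -/
noncomputable def Dtens (f : V →ₗ[k] V)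
    (hf : ∀ x : V, f (AbRes.pMap (p := p) (k := k) x) = 0) :
    uRes p k V ⊗[k] uRes p k V →ₗ[k] uRes p k V ⊗[k] uRes p k V :=
  LinearMap.rTensor (uRes p k V) (Dres p k V f hf)
    + LinearMap.lTensor (uRes p k V) (Dres p k V f hf)

/-- `Φ_z` in (cobar) degree 1: `Φ_z(r) = r^p − λ r + ρ_z^{p−1}(r)`. -/
noncomputable def Phi1 (lam : k) (f : V →ₗ[k] V)
    (hf : ∀ x : V, f (AbRes.pMap (p := p) (k := k) x) = 0) (r : uRes p k V) : uRes p k V :=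
  r ^ p - lam • r + ((Dres p k V f hf) ^ (p - 1) : uRes p k V →ₗ[k] uRes p k V) r

/-- `Φ_z` in (cobar) degree 2: `Φ_z(χ) = χ^p − λ χ + (ρ_z ⊗ 1 + 1 ⊗ ρ_z)^{p−1}(χ)`,
the `p`-th power being the one of the ring `u(h) ⊗ u(h)`. -/
noncomputable def Phi2 (lam : k) (f : V →ₗ[k] V)
    (hf : ∀ x : V, f (AbRes.pMap (p := p) (k := k) x) = 0)
    (χ : uRes p k V ⊗[k] uRes p k V) : uRes p k V ⊗[k] uRes p k V :=
  χ ^ p - lam • χ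
    + ((Dtens p k V f hf) ^ (p - 1) :
        uRes p k V ⊗[k] uRes p k V →ₗ[k] uRes p k V ⊗[k] uRes p k V) χ

end Core

section Rep

variable (p : ℕ) [Fact (Nat.Prime p)] (k : Type) [Field k] [CharP k p]
variable {G V : Type} [AddCommGroup G] [Module k G] [AddCommGroup V] [Module k V]
variable [AbRes p k G] [AbRes p k V]

/-- An algebraic representation of the abelian restricted Lie algebra `g` on the abelian
restricted Lie algebra `h` (conditions (i)–(iv) of the definition of an algebraic
representation, specialized to abelian restricted Lie algebras: condition (iii) is then
vacuous, and in condition (iv) the right-hand side vanishes). -/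
structure IsAlgebraicRep (ρ : G →ₗ[k] Module.End k V) : Prop where
  comm : ∀ x y : G, ρ x * ρ y = ρ y * ρ x
  map_pMap : ∀ x : G, ρ (AbRes.pMap (p := p) (k := k) x) = ρ x ^ p
  annih : ∀ (x : G) (a : V), ρ x (AbRes.pMap (p := p) (k := k) a) = 0

end Rep


section More

variable (p : ℕ) [Fact (Nat.Prime p)] (k : Type) [Field k] [CharP k p]
variable (V : Type) [AddCommGroup V] [Module k V] [AbRes p k V]

/-- The functorial extension of a linear map of abelian restricted Lie algebras commuting
with the restricted maps, to an algebra map `u(h) → u(h')` (a morphism of Hopf algebras). -/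
noncomputable def uResMap (W : Type) [AddCommGroup W] [Module k W] [AbRes p k W]
    (f : V →ₗ[k] W)
    (hcompat : ∀ x : V, f (AbRes.pMap (p := p) (k := k) x)
      = AbRes.pMap (p := p) (k := k) (f x)) : uRes p k V →ₐ[k] uRes p k W :=
  extendAlg p k V ((mkι p k W).comp f) (fun x y => mkι_comm p k W (f x) (f y))
    (fun x => by
      simp only [LinearMap.coe_comp, Function.comp_apply]
      rw [mkι_pow, hcompat])

/-- `Φ_z` restricted to `h ⊆ u(h)`: `Φ_z(r) = r^{[p]} − λ r + ρ_z^{p−1}(r)`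
(for `r ∈ h` one has `r^p = r^{[p]}` in `u(h)`). -/
noncomputable def PhiV (lam : k) (f : Module.End k V) : V → V :=
  fun r => AbRes.pMap (p := p) (k := k) r - lam • r + (f ^ (p - 1)) r

/-- The abelian type determined by `ρ_z = f` and `z^{[p]} = λ z` is *permissible* if
`Ker ρ_z = Im Φ_z` on `h`. -/
noncomputable def Permissible (lam : k) (f : Module.End k V) : Prop :=
  {r : V | f r = 0} = Set.range (PhiV p k V lam f)

end More

section Iso

variable (p : ℕ) (k : Type) [Field k]

/-- An isomorphism of (abelian) restricted Lie algebras: a linear equivalence commuting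
with the restricted maps. -/
structure RestrictedLieIso (V W : Type) [AddCommGroup V] [Module k V] [AddCommGroup W]
    [Module k W] [AbRes p k V] [AbRes p k W] extends V ≃ₗ[k] W where
  map_pMap : ∀ x : V, toLinearEquiv (AbRes.pMap (p := p) (k := k) x)
    = AbRes.pMap (p := p) (k := k) (toLinearEquiv x)

/-- An isomorphism of abelian types `T = (g, h, ρ) → T' = (g', h', ρ')` : a pair
`(φ₁ : g' → g, φ₂ : h → h')` of restricted Lie algebra isomorphisms intertwining `ρ`
and `ρ'`. -/
structure AbTypeIso {G V G' V' : Type}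
    [AddCommGroup G] [Module k G] [AddCommGroup V] [Module k V]
    [AddCommGroup G'] [Module k G'] [AddCommGroup V'] [Module k V']
    [AbRes p k G] [AbRes p k V] [AbRes p k G'] [AbRes p k V']
    (ρ : G →ₗ[k] Module.End k V) (ρ' : G' →ₗ[k] Module.End k V') where
  e1 : RestrictedLieIso p k G' G
  e2 : RestrictedLieIso p k V V'
  compat : ∀ (x' : G') (a : V),
    e2.toLinearEquiv (ρ (e1.toLinearEquiv x') a) = ρ' x' (e2.toLinearEquiv a)

end Iso

section Hopf

variable (k : Type) [Field k]

/-- The primitive space `P(H)` of a bialgebra `H`. -/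
noncomputable def primSpace (H : Type) [Ring H] [Bialgebra k H] : Submodule k H where
  carrier := {x : H | Coalgebra.comul (R := k) x = x ⊗ₜ[k] (1 : H) + (1 : H) ⊗ₜ[k] x}
  add_mem' := by
    intro a b ha hb
    simp only [Set.mem_setOf_eq] at *
    rw [map_add, ha, hb, TensorProduct.add_tmul, TensorProduct.tmul_add]
    abel
  zero_mem' := by simp
  smul_mem' := by
    intro c x hx
    simp only [Set.mem_setOf_eq] at *
    rw [map_smul, hx, smul_add, TensorProduct.smul_tmul', ← TensorProduct.tmul_smul]

/-- A subcoalgebra of a bialgebra, as a submodule `C` with `Δ(C) ⊆ C ⊗ C`. -/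
def IsSubcoalgebra (H : Type) [Ring H] [Bialgebra k H] (C : Submodule k H) : Prop :=
  ∀ x ∈ C, Coalgebra.comul (R := k) x ∈ Submodule.map₂ (TensorProduct.mk k H H) C C

/-- A simple subcoalgebra: a nonzero subcoalgebra with no nonzero proper subcoalgebras. -/
def IsSimpleSubcoalgebra (H : Type) [Ring H] [Bialgebra k H] (C : Submodule k H) : Prop :=
  C ≠ ⊥ ∧ IsSubcoalgebra k H C ∧
    ∀ D ≤ C, IsSubcoalgebra k H D → D = ⊥ ∨ D = C

/-- The coradical of a bialgebra: the sum of all its simple subcoalgebras. -/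
noncomputable def coradical (H : Type) [Ring H] [Bialgebra k H] : Submodule k H :=
  sSup {C | IsSimpleSubcoalgebra k H C}

/-- A (finite-dimensional) bialgebra is connected if its coradical is one-dimensional. -/
def IsConnectedCoalg (H : Type) [Ring H] [Bialgebra k H] : Prop :=
  Module.finrank k ↥(coradical k H) = 1

/-- An isomorphism of Hopf algebras: an algebra isomorphism compatible with the
comultiplications and the counits. -/
structure HopfAlgIso (H1 H2 : Type) [Ring H1] [Ring H2] [HopfAlgebra k H1]
    [HopfAlgebra k H2] extends H1 ≃ₐ[k] H2 where
  map_comul : ∀ a : H1, Coalgebra.comul (R := k) (toAlgEquiv a)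
      = TensorProduct.map toAlgEquiv.toLinearMap toAlgEquiv.toLinearMap
          (Coalgebra.comul (R := k) a)
  map_counit : ∀ a : H1, Coalgebra.counit (R := k) (toAlgEquiv a) = Coalgebra.counit (R := k) a

end Hopf

section Realization

variable (p : ℕ) [Fact (Nat.Prime p)] (k : Type) [Field k] [CharP k p]
variable (n : ℕ) (V : Type) [AddCommGroup V] [Module k V] [AbRes p k V]

/-- A realization of the primitive deformation `u_z(D)` of `u(T)` associated to a datum
`D = (T, Θ, χ)` and `0 ≠ z ∈ g` with `z^{[p]} = λ z`: a connected Hopf algebra `H` of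
dimension `p^{n+1}` containing `u(h)` as a Hopf subalgebra and an element `Z` satisfying
the deformed relations `[Z, r] = ρ_z(r)`, `Z^p − λZ + Θ = 0`,
`Δ(Z) = Z ⊗ 1 + 1 ⊗ Z + χ`, generating `H` over `u(h)`, and whose primitive space is
exactly (the image of) `h`.  Here `D : u(h) → u(h)` is the derivation extending `ρ_z`. -/
structure PDRealization (D : uRes p k V →ₗ[k] uRes p k V) (lam : k) (Θ : uRes p k V)
    (χ : uRes p k V ⊗[k] uRes p k V) : Type 1 where
  H : Type
  [ringH : Ring H]
  [hopfH : HopfAlgebra k H]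
  findim : Module.finrank k H = p ^ (n + 1)
  connected : IsConnectedCoalg k H
  j : uRes p k V →ₐ[k] H
  j_inj : Function.Injective j
  j_comul : ∀ a : uRes p k V, Coalgebra.comul (R := k) (j a)
      = TensorProduct.map j.toLinearMap j.toLinearMap (comul p k V a)
  j_counit : ∀ a : uRes p k V, Coalgebra.counit (R := k) (j a) = counit p k V a
  Z : H
  gen : Algebra.adjoin k (Set.range j ∪ {Z}) = ⊤
  commZ : ∀ a : uRes p k V, Z * j a - j a * Z = j (D a)
  powZ : Z ^ p - lam • Z + j Θ = 0
  comulZ : Coalgebra.comul (R := k) Z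
      = Z ⊗ₜ[k] (1 : H) + (1 : H) ⊗ₜ[k] Z
        + TensorProduct.map j.toLinearMap j.toLinearMap χ
  prim : primSpace k H = Submodule.map (j.toLinearMap ∘ₗ mkι p k V) ⊤

/-- `D = (T, Θ, χ)` is a PD datum with respect to `z` (with `z^{[p]} = λz` and
`D` the derivation of `u(h)` extending `ρ_z`) iff the corresponding primitive
deformation `u_z(D)` exists, i.e. is a `p^{n+1}`-dimensional connected Hopf algebra whose
primitive space is (isomorphic to) `h`. -/
def IsPDDatum (D : uRes p k V →ₗ[k] uRes p k V) (lam : k) (Θ : uRes p k V)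
    (χ : uRes p k V ⊗[k] uRes p k V) : Prop :=
  Nonempty (PDRealization p k n V D lam Θ χ)

/-- Hopf algebra isomorphisms between (the underlying Hopf algebras of) two primitive
deformation realizations. -/
def RealIso {n' : ℕ} {V' : Type} [AddCommGroup V'] [Module k V'] [AbRes p k V']
    {D : uRes p k V →ₗ[k] uRes p k V} {lam : k} {Θ : uRes p k V}
    {χ : uRes p k V ⊗[k] uRes p k V}
    {D' : uRes p k V' →ₗ[k] uRes p k V'} {lam' : k} {Θ' : uRes p k V'}
    {χ' : uRes p k V' ⊗[k] uRes p k V'}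
    (R : PDRealization p k n V D lam Θ χ)
    (R' : PDRealization p k n' V' D' lam' Θ' χ') : Type :=
  letI := R.ringH; letI := R.hopfH; letI := R'.ringH; letI := R'.hopfH
  HopfAlgIso k R.H R'.H

end Realization

section Points

variable (p n : ℕ) [Fact (Nat.Prime p)] (k : Type) [Field k] [CharP k p]
variable (V : Type) [AddCommGroup V] [Module k V] [AbRes p k V]

/-- Index set for the coordinates `a_{ij}`, `1 ≤ i < j ≤ n`. -/
abbrev UpperIdx (n : ℕ) : Type := {ij : Fin n × Fin n // ij.1 < ij.2}

/-- A point of the affine space `𝔸^{n(n+1)/2}`, with coordinates `(a_{ij}, b_k)`. -/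
abbrev Pt (n : ℕ) (k : Type) : Type := (UpperIdx n → k) × (Fin n → k)

/-- The 2-cocycle `χ_P = ∑_{i<j} a_{ij} x_i ⊗ x_j + ω(∑_k b_k x_k)` associated to a point
`P ∈ 𝔸^{n(n+1)/2}` and a basis `x` of `h`. -/
noncomputable def chiP (x : Module.Basis (Fin n) k V) (P : Pt n k) :
    uRes p k V ⊗[k] uRes p k V :=
  (∑ q : UpperIdx n,
      P.1 q • ((mkι p k V (x q.1.1)) ⊗ₜ[k] (mkι p k V (x q.1.2))))
    + omega p k V (mkι p k V (∑ j, P.2 j • x j))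

/-- A point `P` is admissible w.r.t. the type `T` if there is `s ∈ u(h)⁺` with
`Φ_z(χ_P) = ∂¹(s)` and `ρ_z(s) = 0`. -/
noncomputable def IsAdmissible (lam : k) (f : V →ₗ[k] V)
    (hf : ∀ a : V, f (AbRes.pMap (p := p) (k := k) a) = 0)
    (x : Module.Basis (Fin n) k V) (P : Pt n k) : Prop :=
  ∃ s ∈ Aplus p k V, Phi2 p k V lam f hf (chiP p n k V x P) = d1 p k V s
    ∧ Dres p k V f hf s = 0

/-- The characterization of PD data: `(T, Θ, χ)` is a PD datum w.r.t. `z` iff `χ` is a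
2-cocycle which is not a 2-coboundary, `ρ_z(Θ) = 0` and `Φ_z(χ) = ∂¹(Θ)`. -/
noncomputable def IsPDDatumC (lam : k) (f : V →ₗ[k] V)
    (hf : ∀ a : V, f (AbRes.pMap (p := p) (k := k) a) = 0)
    (Θ : uRes p k V) (χ : uRes p k V ⊗[k] uRes p k V) : Prop :=
  Θ ∈ Aplus p k V ∧ χ ∈ AplusSq p k V ∧ d2 p k V χ = 0 ∧
    (¬ ∃ s ∈ Aplus p k V, χ = d1 p k V s) ∧
    Dres p k V f hf Θ = 0 ∧ Phi2 p k V lam f hf χ = d1 p k V Θ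

/-- The equivalence relation on PD data defining `ℋ²(T)`:
`(Θ, χ) ∼ (Θ', χ')` iff `Θ' − Θ = Φ_z(s)` and `χ' − χ = ∂¹(s)` for some `s ∈ u(h)⁺`. -/
noncomputable def PDEquiv (lam : k) (f : V →ₗ[k] V)
    (hf : ∀ a : V, f (AbRes.pMap (p := p) (k := k) a) = 0)
    (d d' : uRes p k V × (uRes p k V ⊗[k] uRes p k V)) : Prop :=
  ∃ s ∈ Aplus p k V, d'.1 - d.1 = Phi1 p k V lam f hf s ∧ d'.2 - d.2 = d1 p k V s

/-- The action of an automorphism `φ = (γ, G) ∈ Aut(T)` on points of `𝔸^{n(n+1)/2}`: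
`ã_{ij} = ∑_{r<s} γ(G_{ri}G_{sj} − G_{rj}G_{si}) a_{rs}`,
`b̃_k = ∑_s γ^{1/p} G_{sk} b_s`. -/
noncomputable def actPt [PerfectRing k p] (γ : k) (Gm : Matrix (Fin n) (Fin n) k)
    (P : Pt n k) : Pt n k :=
  (fun q' => ∑ q : UpperIdx n,
      γ * (Gm q.1.1 q'.1.1 * Gm q.1.2 q'.1.2 - Gm q.1.1 q'.1.2 * Gm q.1.2 q'.1.1) * P.1 q,
   fun j => ∑ s : Fin n, (frobeniusEquiv k p).symm γ * Gm s j * P.2 s)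

end Points

end PD

/-! Put `C(u, v) = ((u + v)^p - u^p - v^p) / p = ∑_{0<i<p} ((p-1)!/(i!(p-i)!)) uⁱ v^{p-i}`
(`addPowCarry`). Then `ω(r) = C(r ⊗ 1, 1 ⊗ r)`, and since `r` and `s` are primitive,
`∂¹ C(r, s) = C(1 ⊗ r, 1 ⊗ s) - C(Δr, Δs) + C(r ⊗ 1, s ⊗ 1)`. So both sides of the first identity
are combinations of values of `C` at sums of the four commuting elements `r ⊗ 1, s ⊗ 1, 1 ⊗ r,
1 ⊗ s`; multiplied by `p`, both expand to the same combination of `p`-th powers. Division by `p`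
is legitimate in the universal case `ℤ[X₀, X₁, X₂, X₃]`, which specializes to any commutative
subring. Homogeneity of `ω` is that of `C`. -/

theorem Nat.Prime.factorial_pred_div_eq_choose_div {p i : ℕ} (hp : p.Prime) (hi : 0 < i)
    (hip : i < p) :
    Nat.factorial (p - 1) / (Nat.factorial i * Nat.factorial (p - i)) = p.choose i / p := by
  obtain ⟨m, hm⟩ := hp.dvd_choose_self hi.ne' hip
  have hfac :
      p * (m * (Nat.factorial i * Nat.factorial (p - i))) = p * Nat.factorial (p - 1) := by
    rw [Nat.mul_factorial_pred hp.ne_zero, ← Nat.choose_mul_factorial_mul_factorial hip.le, hm]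
    ring
  rw [← Nat.eq_of_mul_eq_mul_left hp.pos hfac, hm,
    Nat.mul_div_cancel _ (by positivity), Nat.mul_div_cancel_left _ hp.pos]

section AddPowCarry

open Finset

variable (p : ℕ)

def addPowCarry {R : Type*} [Semiring R] (u v : R) : R :=
  ∑ i ∈ Ico 1 p,
    (Nat.factorial (p - 1) / (Nat.factorial i * Nat.factorial (p - i))) • (u ^ i * v ^ (p - i))

theorem map_addPowCarry {R S F : Type*} [Semiring R] [Semiring S] [FunLike F R S]
    [RingHomClass F R S] (f : F) (u v : R) :
    f (addPowCarry p u v) = addPowCarry p (f u) (f v) := by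
  simp only [addPowCarry, map_sum, map_nsmul, map_mul, map_pow]

theorem addPowCarry_eq_sum_smul (R : Type*) {A : Type*} [Semiring R] [Semiring A]
    [Module R A] (u v : A) :
    addPowCarry p u v = ∑ i ∈ Ico 1 p,
      ((Nat.factorial (p - 1) / (Nat.factorial i * Nat.factorial (p - i)) : ℕ) : R) •
        (u ^ i * v ^ (p - i)) := by
  simp only [addPowCarry, Nat.cast_smul_eq_nsmul]

theorem addPowCarry_smul {R A : Type*} [CommSemiring R] [Semiring A] [Algebra R A] (c : R)
    (u v : A) : addPowCarry p (c • u) (c • v) = c ^ p • addPowCarry p u v := by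
  simp only [addPowCarry, smul_sum]
  refine sum_congr rfl fun i hi => ?_
  rw [smul_pow, smul_pow, smul_mul_smul, ← pow_add, Nat.add_sub_cancel' (mem_Ico.mp hi).2.le,
    smul_comm]

variable {p}

theorem add_pow_prime_eq_addPowCarry {R : Type*} [CommSemiring R] (hp : p.Prime) (u v : R) :
    (u + v) ^ p = u ^ p + v ^ p + p * addPowCarry p u v := by
  rw [add_pow_prime_eq' hp, addPowCarry, ← Ico_add_one_left_eq_Ioo, zero_add]
  congr 2
  refine sum_congr rfl fun i hi => ?_
  obtain ⟨hi0, hip⟩ := mem_Ico.mp hi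
  rw [hp.factorial_pred_div_eq_choose_div hi0 hip, nsmul_eq_mul, mul_comm]

theorem addPowCarry_interchange {R : Type*} [CommRing R] (hp : p.Prime) (x y x' y' : R) :
    addPowCarry p x x' + addPowCarry p y y' - addPowCarry p (x + y) (x' + y')
      = addPowCarry p x' y' - addPowCarry p (x + x') (y + y') + addPowCarry p x y := by
  let X : Fin 4 → MvPolynomial (Fin 4) ℤ := MvPolynomial.X
  have universal :
      addPowCarry p (X 0) (X 2) + addPowCarry p (X 1) (X 3)
          - addPowCarry p (X 0 + X 1) (X 2 + X 3)
        = addPowCarry p (X 2) (X 3) - addPowCarry p (X 0 + X 2) (X 1 + X 3)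
          + addPowCarry p (X 0) (X 1) := by
    have e := add_pow_prime_eq_addPowCarry (R := MvPolynomial (Fin 4) ℤ) hp
    refine mul_left_cancel₀ (Nat.cast_ne_zero.mpr hp.ne_zero : (p : MvPolynomial (Fin 4) ℤ) ≠ 0) ?_
    linear_combination e (X 0) (X 1) - e (X 0) (X 2) - e (X 1) (X 3) + e (X 2) (X 3)
      + e (X 0 + X 1) (X 2 + X 3) - e (X 0 + X 2) (X 1 + X 3)
  simpa [X, map_addPowCarry] using congrArg (MvPolynomial.aeval ![x, y, x', y']) universal

open scoped IsMulCommutative in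
theorem Commute.addPowCarry_interchange {R : Type*} [Ring R] {p : ℕ} (hp : p.Prime)
    {x y x' y' : R} (hxy : Commute x y) (hxx' : Commute x x') (hxy' : Commute x y')
    (hyx' : Commute y x') (hyy' : Commute y y') (hx'y' : Commute x' y') :
    addPowCarry p x x' + addPowCarry p y y' - addPowCarry p (x + y) (x' + y')
      = addPowCarry p x' y' - addPowCarry p (x + x') (y + y') + addPowCarry p x y := by
  let S := Subring.closure ({x, y, x', y'} : Set R)
  have : IsMulCommutative S := Subring.isMulCommutative_closure <| by
    simp only [Set.mem_insert_iff, Set.mem_singleton_iff]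
    rintro a (rfl | rfl | rfl | rfl) b (rfl | rfl | rfl | rfl) <;>
      first | rfl | exact Commute.eq ‹_› | exact (Commute.eq ‹_›).symm
  have mem {a : R} (ha : a ∈ ({x, y, x', y'} : Set R)) : a ∈ S := Subring.subset_closure ha
  simpa only [map_add, map_sub, map_addPowCarry, Subring.subtype_apply] using
    congrArg S.subtype <| _root_.addPowCarry_interchange hp (⟨x, mem (by simp)⟩ : S)
      ⟨y, mem (by simp)⟩ ⟨x', mem (by simp)⟩ ⟨y', mem (by simp)⟩

end AddPowCarry

namespace PD

variable {p : ℕ} [Fact p.Prime] {k : Type} [Field k] [CharP k p]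
variable {V : Type} [AddCommGroup V] [Module k V] [AbRes p k V]

theorem comul_mkι (x : V) :
    comul p k V (mkι p k V x) = mkι p k V x ⊗ₜ[k] 1 + 1 ⊗ₜ[k] mkι p k V x :=
  extendAlg_mkι p k V _ _ _ x

theorem d1_apply (t : uRes p k V) : d1 p k V t = 1 ⊗ₜ[k] t - comul p k V t + t ⊗ₜ[k] 1 := rfl

theorem omega_eq_addPowCarry (a : uRes p k V) :
    omega p k V a = addPowCarry p (a ⊗ₜ[k] (1 : uRes p k V)) (1 ⊗ₜ[k] a) := by
  simp only [omega, addPowCarry_eq_sum_smul p k, Algebra.TensorProduct.tmul_pow, one_pow,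
    Algebra.TensorProduct.tmul_mul_tmul, mul_one, one_mul]

theorem omega_smul (c : k) (a : uRes p k V) : omega p k V (c • a) = c ^ p • omega p k V a := by
  rw [omega_eq_addPowCarry, omega_eq_addPowCarry, ← TensorProduct.smul_tmul',
    TensorProduct.tmul_smul, addPowCarry_smul]

theorem omega_add_sub_omega_add_eq_d1 {a b : uRes p k V} (hab : Commute a b)
    (ha : comul p k V a = a ⊗ₜ[k] 1 + 1 ⊗ₜ[k] a) (hb : comul p k V b = b ⊗ₜ[k] 1 + 1 ⊗ₜ[k] b) :
    omega p k V a + omega p k V b - omega p k V (a + b) = d1 p k V (addPowCarry p a b) := by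
  have h1t : (1 : uRes p k V) ⊗ₜ[k] addPowCarry p a b = addPowCarry p (1 ⊗ₜ a) (1 ⊗ₜ b) :=
    map_addPowCarry p Algebra.TensorProduct.includeRight a b
  have ht1 : addPowCarry p a b ⊗ₜ[k] (1 : uRes p k V) = addPowCarry p (a ⊗ₜ 1) (b ⊗ₜ 1) :=
    map_addPowCarry p (Algebra.TensorProduct.includeLeft (S := k)) a b
  rw [omega_eq_addPowCarry, omega_eq_addPowCarry, omega_eq_addPowCarry, d1_apply, h1t, ht1,
    map_addPowCarry, ha, hb, TensorProduct.add_tmul, TensorProduct.tmul_add]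
  have h1 (u v : uRes p k V) : Commute (u ⊗ₜ[k] (1 : uRes p k V)) (1 ⊗ₜ[k] v) :=
    (Commute.one_right u).tmul (Commute.one_left v)
  exact Commute.addPowCarry_interchange Fact.out (hab.tmul (Commute.refl 1)) (h1 a a) (h1 a b)
    (h1 b a) (h1 b b) ((Commute.refl 1).tmul hab)

end PD

open PD in
theorem omega_sum_difference_is_coboundary_general
    (p : ℕ) [Fact (Nat.Prime p)] (k : Type) [Field k] [CharP k p]
    (V : Type) [AddCommGroup V] [Module k V] [AbRes p k V] :
    (∀ r s : V,
      omega p k V (mkι p k V r) + omega p k V (mkι p k V s)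
          - omega p k V (mkι p k V (r + s))
        = d1 p k V (∑ i ∈ Finset.Ico 1 p,
            ((Nat.factorial (p - 1) / (Nat.factorial i * Nat.factorial (p - i)) : ℕ) : k) •
              ((mkι p k V r) ^ i * (mkι p k V s) ^ (p - i))))
    ∧ (∀ (α : k) (r : V),
        omega p k V (mkι p k V (α • r)) = α ^ p • omega p k V (mkι p k V r)) := by
  refine ⟨fun r s => ?_, fun α r => by rw [map_smul, omega_smul]⟩
  rw [map_add, ← addPowCarry_eq_sum_smul]
  exact omega_add_sub_omega_add_eq_d1 (mkι_comm p k V r s) (comul_mkι r) (comul_mkι s)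

open PD in
/-- Let `h` be an abelian restricted Lie algebra over `k`.  For all
`r, s ∈ h`, in the cobar construction `Ω u(h)` one has
`ω(r) + ω(s) − ω(r+s) = ∂¹( ∑_{i=1}^{p−1} ((p−1)!/(i!(p−i)!)) rⁱ s^{p−i} )`.
Moreover `ω(αr) = α^p ω(r)` for every `α ∈ k`. -/
theorem omega_sum_difference_is_coboundary
    (p : ℕ) [Fact (Nat.Prime p)] (k : Type) [Field k] [CharP k p] [IsAlgClosed k]
    (V : Type) [AddCommGroup V] [Module k V] [AbRes p k V] :
    (∀ r s : V,
      omega p k V (mkι p k V r) + omega p k V (mkι p k V s)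
          - omega p k V (mkι p k V (r + s))
        = d1 p k V (∑ i ∈ Finset.Ico 1 p,
            ((Nat.factorial (p - 1) / (Nat.factorial i * Nat.factorial (p - i)) : ℕ) : k) •
              ((mkι p k V r) ^ i * (mkι p k V s) ^ (p - i))))
    ∧ (∀ (α : k) (r : V),
        omega p k V (mkι p k V (α • r)) = α ^ p • omega p k V (mkι p k V r)) :=
  omega_sum_difference_is_coboundary_general p k V
end

section
/- Let T = (g, h, ρ) be an abelian type and let z and z′ be two bases of g. Then Ker ρ_z = Im Φ_z on h if and only if Ker ρ_{z′} = Im Φ_{z′} on h. Hence the permissibility of T does not depend on the choice of basis of g. -/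
set_option linter.unusedSectionVars false

open scoped TensorProduct

attribute [local instance 100] LieRing.ofAssociativeRing

/-! Another basis of `g` is `z' = c • z` with `c ≠ 0`. Then `λ' = c ^ (p - 1) * λ`,
`ρ_{z'} = c • ρ_z` and `Φ_{z'}(c • r) = c ^ p • Φ_z(r)`, so passing from `z` to `z'`
multiplies both `Ker ρ_z` and `Im Φ_z` by the nonzero scalar `c ^ p`. -/

namespace PD

open scoped Pointwise

lemma AbRes.eigenvalue_smul {p : ℕ} (hp : p ≠ 0) {k G : Type} [Field k] [AddCommGroup G]
    [Module k G] [AbRes p k G] {z : G} (hz : z ≠ 0) {c lam lam' : k} (hc : c ≠ 0)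
    (hlam : AbRes.pMap (p := p) (k := k) z = lam • z)
    (hlam' : AbRes.pMap (p := p) (k := k) (c • z) = lam' • c • z) :
    lam' = c ^ (p - 1) * lam := by
  have hscalar : (lam' * c) • z = (c ^ p * lam) • z := by
    rw [mul_smul, ← hlam', AbRes.pMap_smul, hlam, smul_smul]
  apply mul_right_cancel₀ hc
  rw [smul_left_injective k hz hscalar, ← pow_sub_one_mul hp]
  ring

section Rescaling

variable (p : ℕ) [Fact (Nat.Prime p)] (k : Type) [Field k] [CharP k p]
variable (V : Type) [AddCommGroup V] [Module k V] [AbRes p k V]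

lemma PhiV_smul (c lam : k) (f : Module.End k V) (r : V) :
    PhiV p k V (c ^ (p - 1) * lam) (c • f) (c • r) = c ^ p • PhiV p k V lam f r := by
  have hcp : c ^ p = c ^ (p - 1) * c := (pow_sub_one_mul (Fact.out : p.Prime).ne_zero c).symm
  simp only [PhiV, AbRes.pMap_smul, smul_pow, LinearMap.smul_apply, map_smul, smul_add,
    smul_sub, smul_smul, hcp]
  ring_nf

lemma range_PhiV_smul {c : k} (hc : c ≠ 0) (lam : k) (f : Module.End k V) :
    Set.range (PhiV p k V (c ^ (p - 1) * lam) (c • f)) =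
      c ^ p • Set.range (PhiV p k V lam f) := by
  have hcomp : PhiV p k V (c ^ (p - 1) * lam) (c • f) ∘ (c • ·) =
      (c ^ p • ·) ∘ PhiV p k V lam f :=
    funext (PhiV_smul p k V c lam f)
  rw [← (MulAction.surjective₀ hc).range_comp, hcomp, Set.range_comp, Set.image_smul]

lemma setOf_smul_apply_eq_zero {c : k} (hc : c ≠ 0) (f : Module.End k V) :
    {r : V | (c • f) r = 0} = c ^ p • {r : V | f r = 0} := by
  ext r
  simp [Set.mem_smul_set_iff_inv_smul_mem₀ (pow_ne_zero p hc), hc]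

lemma permissible_smul_iff {c : k} (hc : c ≠ 0) (lam : k) (f : Module.End k V) :
    Permissible p k V (c ^ (p - 1) * lam) (c • f) ↔ Permissible p k V lam f := by
  rw [Permissible, Permissible, setOf_smul_apply_eq_zero p k V hc, range_PhiV_smul p k V hc]
  exact (MulAction.injective₀ (pow_ne_zero p hc)).eq_iff

end Rescaling

end PD

open PD in
theorem permissible_independent_of_basis_general
    (p : ℕ) [Fact (Nat.Prime p)] (k : Type) [Field k] [CharP k p]
    (G V : Type) [AddCommGroup G] [Module k G] [AddCommGroup V] [Module k V]
    [AbRes p k G] [AbRes p k V]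
    (ρ : G →ₗ[k] Module.End k V)
    (z z' : G)
    (hz : Submodule.span k {z} = ⊤)
    (hz0' : z' ≠ 0)
    (lam lam' : k)
    (hlam : AbRes.pMap (p := p) (k := k) z = lam • z)
    (hlam' : AbRes.pMap (p := p) (k := k) z' = lam' • z') :
    Permissible p k V lam (ρ z) ↔ Permissible p k V lam' (ρ z') := by
  obtain ⟨c, rfl⟩ := Submodule.mem_span_singleton.1 (hz ▸ Submodule.mem_top : z' ∈ _)
  have hc : c ≠ 0 := left_ne_zero_of_smul hz0'
  have hz0 : z ≠ 0 := right_ne_zero_of_smul hz0'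
  rw [AbRes.eigenvalue_smul (Fact.out : p.Prime).ne_zero hz0 hc hlam hlam', map_smul,
    permissible_smul_iff p k V hc]

open PD in
/-- Let `T = (g, h, ρ)` be an abelian type and let `z` and `z'` be two
bases of `g`.  Then `Ker ρ_z = Im Φ_z` on `h` if and only if `Ker ρ_{z'} = Im Φ_{z'}`
on `h`.  Hence the permissibility of `T` does not depend on the choice of basis of `g`. -/
theorem permissible_independent_of_basis
    (p n : ℕ) [Fact (Nat.Prime p)] (k : Type) [Field k] [CharP k p] [IsAlgClosed k]
    (G V : Type) [AddCommGroup G] [Module k G] [AddCommGroup V] [Module k V]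
    [AbRes p k G] [AbRes p k V]
    (ρ : G →ₗ[k] Module.End k V) (hrep : IsAlgebraicRep p k ρ)
    (hg : Module.finrank k G = 1) (hh : Module.finrank k V = n) (hn : 1 ≤ n)
    (z z' : G)
    (hz : Submodule.span k {z} = ⊤) (hz' : Submodule.span k {z'} = ⊤)
    (hz0 : z ≠ 0) (hz0' : z' ≠ 0)
    (lam lam' : k)
    (hlam : AbRes.pMap (p := p) (k := k) z = lam • z)
    (hlam' : AbRes.pMap (p := p) (k := k) z' = lam' • z') :
    Permissible p k V lam (ρ z) ↔ Permissible p k V lam' (ρ z') :=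
  permissible_independent_of_basis_general p k G V ρ z z' hz hz0' lam lam' hlam hlam'
end
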